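/- For every positive integer N, the quotient of successive reflection functions at s = 1 satisfies lim_{s→1} χ(N+1; s)/χ(N; s) = (N+2)·N·( N+1 − a(N+1) ) / ( (N+1)²·( N − a(N) ) ), where a(N) = Σ_{n=1}^N n·(ln(n+1) − ln(n)) and s ranges over complex numbers at which both χ(N+1; s) and χ(N; s) are defined and nonzero. -/

import Mathlib

/-- The truncated zeta function `ζ_w(N; s)`. -/
noncomputable def zetaW (N : ℕ) (s : ℂ) : ℂ :=
  (1 / (s - 1)) * ∑ n ∈ Finset.Icc 1 N,
    ((n : ℂ) * ((n : ℂ) + 1) ^ (-s) - (n : ℂ) ^ ((1 : ℂ) - s) + s * (n : ℂ) ^ (-s))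

/-- The reflection function `χ(N; s) = ζ_w(N; 1-s) / ζ_w(N; s)`. -/
noncomputable def chiW (N : ℕ) (s : ℂ) : ℂ := zetaW N (1 - s) / zetaW N s

/-- `a(N) = Σ_{n=1}^N n·(ln(n+1) − ln n)`. -/
noncomputable def aW (N : ℕ) : ℝ :=
  ∑ n ∈ Finset.Icc 1 N, (n : ℝ) * (Real.log ((n : ℝ) + 1) - Real.log (n : ℝ))

/-!
Write `ζ_w(N; s) = G_N(s) / (s - 1)` with `G_N` the (entire) finite sum. Then
`χ(N; s) = (s - 1) / (-s) · G_N(1 - s) / G_N(s)`, and the factor `(s - 1) / (-s)` cancels in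
`χ(N + 1; s) / χ(N; s)`. As `s → 1`, `G_N(s) → G_N(1) = N / (N + 1)` (the terms telescope to
`1/n - 1/(n + 1)`), while `G_N(1 - s)` tends to `G_N(0) = 0`, so the quotient
`G_{N+1}(1 - s) / G_N(1 - s)` tends to the ratio of derivatives `G'_{N+1}(0) / G'_N(0)`, where
`G'_N(0) = N - a(N)`. This is nonzero because `n (log (n + 1) - log n) < 1`.
-/

open Filter Topology

theorem tendsto_div_nhdsNE_of_hasDerivAt {𝕜 : Type*} [NontriviallyNormedField 𝕜]
    {f g : 𝕜 → 𝕜} {a f' g' : 𝕜} (hf : HasDerivAt f f' a) (hg : HasDerivAt g g' a)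
    (hfa : f a = 0) (hga : g a = 0) (hg' : g' ≠ 0) :
    Tendsto (fun x => f x / g x) (𝓝[≠] a) (𝓝 (f' / g')) := by
  refine ((hasDerivAt_iff_tendsto_slope.mp hf).div
    (hasDerivAt_iff_tendsto_slope.mp hg) hg').congr' ?_
  filter_upwards [self_mem_nhdsWithin] with x hx
  have hxa : x - a ≠ 0 := sub_ne_zero.mpr hx
  rw [Pi.div_apply, slope_def_field, slope_def_field, hfa, hga, sub_zero, sub_zero,
    div_div_div_cancel_right₀ hxa]

noncomputable def zetaWTerm (n : ℕ) (s : ℂ) : ℂ :=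
  (n : ℂ) * ((n : ℂ) + 1) ^ (-s) - (n : ℂ) ^ ((1 : ℂ) - s) + s * (n : ℂ) ^ (-s)

noncomputable def zetaWNumerator (N : ℕ) (s : ℂ) : ℂ :=
  ∑ n ∈ Finset.Icc 1 N, zetaWTerm n s

namespace zetaWTerm

variable {n : ℕ}

@[simp] theorem apply_zero : zetaWTerm n 0 = 0 := by simp [zetaWTerm]

theorem apply_one (hn : n ≠ 0) : zetaWTerm n 1 = 1 / n - 1 / (n + 1) := by
  have hn' : (n : ℂ) ≠ 0 := Nat.cast_ne_zero.mpr hn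
  have hn1 : (n : ℂ) + 1 ≠ 0 := Nat.cast_add_one_ne_zero n
  simp only [zetaWTerm, sub_self, Complex.cpow_zero, Complex.cpow_neg_one, one_mul]
  field_simp
  ring

theorem continuous (hn : n ≠ 0) : Continuous (zetaWTerm n) := by
  have hn' : (n : ℂ) ≠ 0 := Nat.cast_ne_zero.mpr hn
  have hn1 : (n : ℂ) + 1 ≠ 0 := Nat.cast_add_one_ne_zero n
  exact ((continuous_const.mul (continuous_neg.const_cpow (Or.inl hn1))).sub
    ((continuous_const.sub continuous_id).const_cpow (Or.inl hn'))).add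
    (continuous_id.mul (continuous_neg.const_cpow (Or.inl hn')))

theorem hasDerivAt_zero (hn : n ≠ 0) :
    HasDerivAt (zetaWTerm n) (1 - n * (Real.log (n + 1) - Real.log n : ℝ)) 0 := by
  have hn' : (n : ℂ) ≠ 0 := Nat.cast_ne_zero.mpr hn
  have hn1 : (n : ℂ) + 1 ≠ 0 := Nat.cast_add_one_ne_zero n
  have hneg : HasDerivAt (fun s : ℂ => -s) (-1) 0 := (hasDerivAt_id 0).neg
  have hsub : HasDerivAt (fun s : ℂ => 1 - s) (-1) 0 := (hasDerivAt_id 0).const_sub 1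
  refine ((((hneg.const_cpow (Or.inl hn1)).const_mul (n : ℂ)).fun_sub
    (hsub.const_cpow (Or.inl hn'))).fun_add
    ((hasDerivAt_id' 0).fun_mul (hneg.const_cpow (Or.inl hn')))).congr_deriv ?_
  rw [Complex.ofReal_sub, Complex.ofReal_log (by positivity), Complex.ofReal_log (by positivity)]
  push_cast
  simp only [neg_zero, Complex.cpow_zero, Complex.cpow_one, sub_zero]
  ring

end zetaWTerm

theorem mul_log_add_one_sub_log_lt_one {x : ℝ} (hx : 0 < x) :
    x * (Real.log (x + 1) - Real.log x) < 1 := by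
  have h := Real.log_lt_sub_one_of_pos (by positivity : 0 < (x + 1) / x)
    (by rw [Ne, div_eq_one_iff_eq hx.ne']; linarith)
  rw [Real.log_div (by positivity) hx.ne'] at h
  calc x * (Real.log (x + 1) - Real.log x) < x * ((x + 1) / x - 1) := by gcongr
    _ = 1 := by field_simp; ring

theorem aW_lt_self {N : ℕ} (hN : 0 < N) : aW N < N := by
  calc aW N < ∑ _n ∈ Finset.Icc 1 N, (1 : ℝ) :=
        Finset.sum_lt_sum_of_nonempty ⟨1, Finset.mem_Icc.mpr ⟨le_rfl, hN⟩⟩ fun n hn =>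
          mul_log_add_one_sub_log_lt_one (Nat.cast_pos.mpr (Finset.mem_Icc.mp hn).1)
    _ = N := by simp

namespace zetaWNumerator

theorem apply_zero (N : ℕ) : zetaWNumerator N 0 = 0 := by
  simp [zetaWNumerator]

theorem apply_one (N : ℕ) : zetaWNumerator N 1 = N / (N + 1) := by
  induction N with
  | zero => simp [zetaWNumerator]
  | succ N ih =>
    rw [zetaWNumerator, Finset.sum_Icc_succ_top (by omega), ← zetaWNumerator, ih,
      zetaWTerm.apply_one N.succ_ne_zero]
    have : (N : ℂ) + 1 ≠ 0 := Nat.cast_add_one_ne_zero N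
    have : (N : ℂ) + 1 + 1 ≠ 0 := by exact_mod_cast Nat.succ_ne_zero (N + 1)
    push_cast
    field_simp
    ring

theorem apply_one_ne_zero {N : ℕ} (hN : N ≠ 0) : zetaWNumerator N 1 ≠ 0 := by
  rw [apply_one]
  exact div_ne_zero (Nat.cast_ne_zero.mpr hN) (Nat.cast_add_one_ne_zero N)

theorem continuous (N : ℕ) : Continuous (zetaWNumerator N) :=
  continuous_finsetSum _ fun _ hn =>
    zetaWTerm.continuous (Nat.one_le_iff_ne_zero.mp (Finset.mem_Icc.mp hn).1)

theorem hasDerivAt_zero (N : ℕ) : HasDerivAt (zetaWNumerator N) (N - aW N) 0 := by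
  have := HasDerivAt.fun_sum fun n (hn : n ∈ Finset.Icc 1 N) =>
    zetaWTerm.hasDerivAt_zero (Nat.one_le_iff_ne_zero.mp (Finset.mem_Icc.mp hn).1)
  refine this.congr_deriv ?_
  simp [aW, Finset.sum_sub_distrib]

theorem tendsto_div_nhdsNE_zero (M : ℕ) {N : ℕ} (hN : 0 < N) :
    Tendsto (fun t => zetaWNumerator M t / zetaWNumerator N t) (𝓝[≠] 0)
      (𝓝 ((M - aW M) / (N - aW N))) :=
  tendsto_div_nhdsNE_of_hasDerivAt (hasDerivAt_zero M) (hasDerivAt_zero N) (apply_zero M)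
    (apply_zero N) (by exact_mod_cast (sub_pos.mpr (aW_lt_self hN)).ne')

end zetaWNumerator

theorem zetaW_eq_div (N : ℕ) (s : ℂ) : zetaW N s = zetaWNumerator N s / (s - 1) := by
  rw [zetaW, zetaWNumerator, one_div_mul_eq_div]
  rfl

theorem chiW_eq (N : ℕ) (s : ℂ) :
    chiW N s = (s - 1) / -s * (zetaWNumerator N (1 - s) / zetaWNumerator N s) := by
  rw [chiW, zetaW_eq_div, zetaW_eq_div, sub_sub_cancel_left]
  simp only [div_eq_mul_inv, mul_inv, inv_inv]
  ring

theorem chiW_div_chiW {M N : ℕ} {s : ℂ} (hs₀ : s ≠ 0) (hs₁ : s ≠ 1) :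
    chiW M s / chiW N s = zetaWNumerator M (1 - s) / zetaWNumerator N (1 - s) *
      (zetaWNumerator N s / zetaWNumerator M s) := by
  have : (s - 1) / -s ≠ 0 := div_ne_zero (sub_ne_zero.mpr hs₁) (neg_ne_zero.mpr hs₀)
  rw [chiW_eq, chiW_eq, mul_div_mul_left _ _ this]
  simp only [div_eq_mul_inv, mul_inv, inv_inv]
  ring

theorem chiW_successive_quotient_at_one (N : ℕ) (hN : 0 < N) :
    Filter.Tendsto (fun s : ℂ => chiW (N + 1) s / chiW N s)
      (nhdsWithin 1
        {s : ℂ | s ≠ 0 ∧ s ≠ 1 ∧ zetaW N s ≠ 0 ∧ zetaW (N + 1) s ≠ 0 ∧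
          zetaW N (1 - s) ≠ 0 ∧ zetaW (N + 1) (1 - s) ≠ 0})
      (nhds (((N : ℂ) + 2) * (N : ℂ) * ((N : ℂ) + 1 - (aW (N + 1) : ℂ)) /
        (((N : ℂ) + 1) ^ 2 * ((N : ℂ) - (aW N : ℂ))))) := by
  have hreflect : Tendsto (fun s : ℂ => 1 - s) (𝓝[≠] 1) (𝓝[≠] 0) := by
    have := ((Homeomorph.subLeft (1 : ℂ)).map_punctured_nhds_eq 1).le
    rwa [Homeomorph.subLeft_apply, sub_self] at this
  have hnear_zero := (zetaWNumerator.tendsto_div_nhdsNE_zero (N + 1) hN).comp hreflect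
  have hat_one := ((zetaWNumerator.continuous N).tendsto 1).div
    ((zetaWNumerator.continuous (N + 1)).tendsto 1)
    (zetaWNumerator.apply_one_ne_zero N.succ_ne_zero)
  have hvalue : ((N : ℂ) + 2) * (N : ℂ) * ((N : ℂ) + 1 - (aW (N + 1) : ℂ)) /
      (((N : ℂ) + 1) ^ 2 * ((N : ℂ) - (aW N : ℂ))) =
      (((N + 1 : ℕ) : ℂ) - aW (N + 1)) / (N - aW N) *
        (zetaWNumerator N 1 / zetaWNumerator (N + 1) 1) := by
    have : (N : ℂ) + 1 ≠ 0 := Nat.cast_add_one_ne_zero N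
    have : (N : ℂ) + 1 + 1 ≠ 0 := by exact_mod_cast Nat.succ_ne_zero (N + 1)
    rw [zetaWNumerator.apply_one, zetaWNumerator.apply_one]
    push_cast
    field_simp
    ring
  rw [hvalue]
  refine ((hnear_zero.mul (hat_one.mono_left nhdsWithin_le_nhds)).mono_left
    (nhdsWithin_mono _ fun s hs => hs.2.1)).congr' ?_
  filter_upwards [self_mem_nhdsWithin] with s hs
  exact (chiW_div_chiW hs.1 hs.2.1).symm
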